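/- Let 1 ≤ q < 2, λ₊, λ₋ > 0, μ ≥ 0, and let γ_q = 2/(2-q). If φ : ℝ → ℝ is a 2π-periodic C¹ weak solution of -φ'' - γ_q² φ = μ(λ₊(φ⁺)^{q-1} - λ₋(φ⁻)^{q-1}) on ℝ satisfying φ(0) = φ'(0) = 0, then φ ≡ 0. -/

import Mathlib

/-!
The Hamiltonian `H = φ'²/2 + γ_q² φ²/2 + μ F(φ)`, with `F` the primitive of the two-phase
nonlinearity, is conserved along solutions. It vanishes at `0`, and all three terms are
nonnegative, so `φ' ≡ 0` and `φ ≡ φ 0 = 0`.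

For `q > 1` the potential `F ~ |s|^q` is differentiable at `0`, so conservation is the chain
rule. For `q = 1` it has a corner at `0`, and the chain rule at a zero of `φ` needs `φ' = 0`
there: at a transversal zero `φ''` would jump between `μλ₋` and `-μλ₊`, whereas a derivative
has no jump discontinuities.
-/

/-- The two-phase nonlinearity `λ₊ (s⁺)^{q-1} - λ₋ (s⁻)^{q-1}`, interpreted for `q = 1`
as `λ₊ χ_{s>0} - λ₋ χ_{s<0}`. -/
noncomputable def twoPhase (lp lm q s : ℝ) : ℝ :=
  if 0 < s then lp * s ^ (q - 1)
  else if s < 0 then -(lm * (-s) ^ (q - 1))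
  else 0

open Real Set Filter Topology Asymptotics

theorem hasDerivAt_eq_of_tendsto_nhdsGT {f f' : ℝ → ℝ} {x e : ℝ}
    (hf : ∀ t, HasDerivAt f (f' t) t) (he : Tendsto f' (𝓝[>] x) (𝓝 e)) : f' x = e := by
  have hright : HasDerivWithinAt f e (Ici x) x :=
    hasDerivWithinAt_Ici_of_tendsto_deriv (s := univ)
      (fun t _ => (hf t).differentiableAt.differentiableWithinAt)
      (hf x).continuousAt.continuousWithinAt univ_mem
      (he.congr fun t => ((hf t).deriv).symm)
  exact (uniqueDiffWithinAt_Ici x).eq_deriv _ (hf x).hasDerivWithinAt hright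

theorem hasDerivAt_comp_of_isBigO_id {F φ : ℝ → ℝ} {x : ℝ} (hF : F =O[𝓝 0] id)
    (hφx : φ x = 0) (hφ : HasDerivAt φ 0 x) : HasDerivAt (fun t => F (φ t)) 0 x := by
  have hF0 : F 0 = 0 := hF.eq_zero_imp.self_of_nhds rfl
  have hφ0 : Tendsto φ (𝓝 x) (𝓝 0) := hφx ▸ hφ.continuousAt.tendsto
  rw [hasDerivAt_iff_isLittleO] at hφ ⊢
  simp only [hφx, hF0, smul_zero, sub_zero] at hφ ⊢
  exact (hF.comp_tendsto hφ0).trans_isLittleO hφ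

theorem isLittleO_abs_rpow_id {q : ℝ} (hq : 1 < q) : (fun s : ℝ => |s| ^ q) =o[𝓝 0] id := by
  have hlim : Tendsto (fun s : ℝ => |s| ^ (q - 1)) (𝓝 0) (𝓝 0) := by
    simpa [zero_rpow (sub_ne_zero.2 hq.ne')] using
      (continuous_abs.tendsto (0 : ℝ)).rpow_const (Or.inr (sub_nonneg.2 hq.le))
  have hsplit : ∀ s : ℝ, |s| ^ q = |s| ^ (q - 1) * |s| := fun s => by
    rw [← rpow_add_one' (abs_nonneg s) (by linarith), sub_add_cancel]
  have h := ((isLittleO_one_iff ℝ).2 hlim).mul_isBigO (isBigO_refl (fun s : ℝ => |s|) (𝓝 0))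
  exact isLittleO_abs_right.1 (h.congr (fun s => (hsplit s).symm) fun s => one_mul _)

noncomputable def hamiltonian (c : ℝ) (P : ℝ → ℝ) (u v : ℝ) : ℝ :=
  v ^ 2 / 2 + c / 2 * u ^ 2 + P u

theorem hamiltonian_conserved {c : ℝ} {f P φ φ' : ℝ → ℝ}
    (hφ : ∀ x, HasDerivAt φ (φ' x) x)
    (hφ' : ∀ x, HasDerivAt φ' (-(c * φ x) - f (φ x)) x)
    (hP : ∀ x, HasDerivAt (fun t => P (φ t)) (f (φ x) * φ' x) x) (x y : ℝ) :
    hamiltonian c P (φ x) (φ' x) = hamiltonian c P (φ y) (φ' y) := by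
  have hH : ∀ x, HasDerivAt (fun t => hamiltonian c P (φ t) (φ' t)) 0 x := fun x =>
    ((((hφ' x).pow 2).div_const 2).add (((hφ x).pow 2).const_mul (c / 2))).add (hP x)
      |>.congr_deriv (by ring)
  exact is_const_of_deriv_eq_zero (fun t => (hH t).differentiableAt) (fun t => (hH t).deriv) x y

theorem eq_zero_of_hamiltonian_eq_zero {c : ℝ} {P : ℝ → ℝ} {u v : ℝ} (hc : 0 ≤ c)
    (hP : 0 ≤ P u) (h : hamiltonian c P u v = 0) : v = 0 := by
  unfold hamiltonian at h
  have : v ^ 2 = 0 := by nlinarith [sq_nonneg u, sq_nonneg v, mul_nonneg hc (sq_nonneg u)]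
  exact pow_eq_zero_iff two_ne_zero |>.mp this

theorem twoPhase_zero (lp lm q : ℝ) : twoPhase lp lm q 0 = 0 := by
  simp [twoPhase]

noncomputable def twoPhasePotential (lp lm q s : ℝ) : ℝ :=
  if 0 < s then lp * s ^ q / q
  else if s < 0 then lm * (-s) ^ q / q
  else 0

theorem twoPhasePotential_zero (lp lm q : ℝ) : twoPhasePotential lp lm q 0 = 0 := by
  simp [twoPhasePotential]

theorem twoPhasePotential_nonneg {lp lm q : ℝ} (hlp : 0 ≤ lp) (hlm : 0 ≤ lm) (hq : 0 ≤ q)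
    (s : ℝ) : 0 ≤ twoPhasePotential lp lm q s := by
  unfold twoPhasePotential
  split_ifs with hpos hneg
  · have := rpow_nonneg hpos.le q
    positivity
  · have := rpow_nonneg (neg_nonneg.2 hneg.le) q
    positivity
  · exact le_rfl

theorem isBigO_twoPhasePotential (lp lm q : ℝ) :
    twoPhasePotential lp lm q =O[𝓝 0] fun s => |s| ^ q := by
  refine IsBigO.of_bound (|lp| / |q| + |lm| / |q|) (Eventually.of_forall fun s => ?_)
  simp only [twoPhasePotential, norm_eq_abs]
  split_ifs with hpos hneg
  · have h := rpow_nonneg hpos.le q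
    rw [abs_of_pos hpos, abs_div, abs_mul, abs_of_nonneg h, mul_div_right_comm]
    exact mul_le_mul_of_nonneg_right (le_add_of_nonneg_right (by positivity)) h
  · have h := rpow_nonneg (neg_nonneg.2 hneg.le) q
    rw [abs_of_neg hneg, abs_div, abs_mul, abs_of_nonneg h, mul_div_right_comm]
    exact mul_le_mul_of_nonneg_right (le_add_of_nonneg_left (by positivity)) h
  · rw [abs_zero]
    positivity

theorem hasDerivAt_twoPhasePotential {lp lm q s : ℝ} (hq : q ≠ 0) (hs : s ≠ 0) :
    HasDerivAt (twoPhasePotential lp lm q) (twoPhase lp lm q s) s := by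
  rcases hs.lt_or_gt with hneg | hpos
  · have hF : twoPhasePotential lp lm q =ᶠ[𝓝 s] fun u => lm * (-u) ^ q / q := by
      filter_upwards [Iio_mem_nhds hneg] with u (hu : u < 0)
      simp [twoPhasePotential, hu, hu.not_gt]
    have hpow : HasDerivAt (fun u : ℝ => (-u) ^ q) (q * (-s) ^ (q - 1) * -1) s := by
      simpa [Function.comp_def] using
        (hasDerivAt_rpow_const (Or.inl (neg_ne_zero.2 hs))).comp s (hasDerivAt_neg s)
    rw [show twoPhase lp lm q s = lm * (q * (-s) ^ (q - 1) * -1) / q by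
      simp [twoPhase, hneg, hneg.not_gt]; field_simp]
    exact ((hpow.const_mul lm).div_const q).congr_of_eventuallyEq hF
  · have hF : twoPhasePotential lp lm q =ᶠ[𝓝 s] fun u => lp * u ^ q / q := by
      filter_upwards [Ioi_mem_nhds hpos] with u (hu : 0 < u)
      simp [twoPhasePotential, hu]
    rw [show twoPhase lp lm q s = lp * (q * s ^ (q - 1)) / q by
      simp [twoPhase, hpos]; field_simp]
    exact (((hasDerivAt_rpow_const (Or.inl hs)).const_mul lp).div_const q).congr_of_eventuallyEq hF

theorem hasDerivAt_twoPhasePotential_zero {lp lm q : ℝ} (hq : 1 < q) :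
    HasDerivAt (twoPhasePotential lp lm q) 0 0 := by
  rw [hasDerivAt_iff_isLittleO_nhds_zero]
  simp only [zero_add, twoPhasePotential_zero, smul_zero, sub_zero]
  exact (isBigO_twoPhasePotential lp lm q).trans_isLittleO (isLittleO_abs_rpow_id hq)

theorem deriv_eq_zero_of_twoPhase_one {c μ lp lm : ℝ} (hμ : 0 < μ) (hlp : 0 < lp)
    (hlm : 0 < lm) {φ φ' : ℝ → ℝ} (hφ : ∀ x, HasDerivAt φ (φ' x) x)
    (hφ' : ∀ x, HasDerivAt φ' (-(c * φ x) - μ * twoPhase lp lm 1 (φ x)) x)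
    {x : ℝ} (hx : φ x = 0) : φ' x = 0 := by
  have no_jump : ∀ a, (∀ᶠ t in 𝓝[>] x, μ * twoPhase lp lm 1 (φ t) = a) → a = 0 := by
    intro a ha
    have hcφ : Tendsto (fun t => -(c * φ t)) (𝓝[>] x) (𝓝 0) := by
      simpa [hx] using ((hφ x).continuousAt.tendsto.const_mul c).neg.mono_left nhdsWithin_le_nhds
    have hlim := hasDerivAt_eq_of_tendsto_nhdsGT hφ'
      ((hcφ.sub_const a).congr' (ha.mono fun t ht => by rw [← ht]))
    simpa [hx, twoPhase_zero] using hlim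
  rcases lt_trichotomy (φ' x) 0 with hneg | hzero | hpos
  · have hsign := eventually_nhdsWithin_sign_eq_of_deriv_neg ((hφ x).deriv ▸ hneg) hx
    have := no_jump (-(μ * lm)) <| by
      filter_upwards [nhdsWithin_le_nhds hsign, self_mem_nhdsWithin] with t ht hxt
      rw [sign_neg (sub_neg.2 hxt), sign_eq_neg_one_iff] at ht
      simp [twoPhase, ht, ht.not_gt]
    nlinarith
  · exact hzero
  · have hsign := eventually_nhdsWithin_sign_eq_of_deriv_pos ((hφ x).deriv ▸ hpos) hx
    have := no_jump (μ * lp) <| by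
      filter_upwards [nhdsWithin_le_nhds hsign, self_mem_nhdsWithin] with t ht hxt
      rw [sign_pos (sub_pos.2 hxt), sign_eq_one_iff] at ht
      simp [twoPhase, ht]
    nlinarith

theorem hasDerivAt_mul_twoPhasePotential_comp {c μ lp lm q : ℝ} (hq : 1 ≤ q) (hlp : 0 < lp)
    (hlm : 0 < lm) (hμ : 0 ≤ μ) {φ φ' : ℝ → ℝ} (hφ : ∀ x, HasDerivAt φ (φ' x) x)
    (hφ' : ∀ x, HasDerivAt φ' (-(c * φ x) - μ * twoPhase lp lm q (φ x)) x) (x : ℝ) :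
    HasDerivAt (fun t => μ * twoPhasePotential lp lm q (φ t))
      (μ * twoPhase lp lm q (φ x) * φ' x) x := by
  rcases hμ.eq_or_lt with rfl | hμ
  · simpa using hasDerivAt_const x (0 : ℝ)
  rw [mul_assoc]
  refine HasDerivAt.const_mul μ ?_
  by_cases hx : φ x = 0
  swap
  · exact (hasDerivAt_twoPhasePotential (by linarith) hx).comp x (hφ x)
  rw [hx, twoPhase_zero, zero_mul]
  rcases hq.eq_or_lt with rfl | hq
  · have hφ0 : HasDerivAt φ 0 x := deriv_eq_zero_of_twoPhase_one hμ hlp hlm hφ hφ' hx ▸ hφ x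
    refine hasDerivAt_comp_of_isBigO_id ?_ hx hφ0
    refine (isBigO_twoPhasePotential lp lm 1).trans ?_
    simpa using isBigO_abs_left.2 (isBigO_refl id (𝓝 (0 : ℝ)))
  · have hF : HasDerivAt (twoPhasePotential lp lm q) 0 (φ x) := by
      rw [hx]; exact hasDerivAt_twoPhasePotential_zero hq
    exact (zero_mul (φ' x)) ▸ hF.comp x (hφ x)

theorem periodic_ode_unique_trivial_general (q lp lm μ : ℝ) (hq1 : 1 ≤ q)
    (hlp : 0 < lp) (hlm : 0 < lm) (hμ : 0 ≤ μ)
    (φ φ' : ℝ → ℝ)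
    (hφ : ∀ x, HasDerivAt φ (φ' x) x)
    (hφ' : ∀ x, HasDerivAt φ'
      (-((2 / (2 - q)) ^ 2 * φ x) - μ * twoPhase lp lm q (φ x)) x)
    (h0 : φ 0 = 0) (h0' : φ' 0 = 0) :
    ∀ x, φ x = 0 := by
  set P := fun s => μ * twoPhasePotential lp lm q s
  have hH : ∀ x, hamiltonian ((2 / (2 - q)) ^ 2) P (φ x) (φ' x) = 0 := fun x => by
    rw [hamiltonian_conserved (f := fun s => μ * twoPhase lp lm q s) hφ hφ'
      (hasDerivAt_mul_twoPhasePotential_comp hq1 hlp hlm hμ hφ hφ') x 0, h0, h0']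
    simp [hamiltonian, P, twoPhasePotential_zero]
  have hφ'_zero : ∀ x, φ' x = 0 := fun x =>
    eq_zero_of_hamiltonian_eq_zero (P := P) (u := φ x) (sq_nonneg _)
      (mul_nonneg hμ (twoPhasePotential_nonneg hlp.le hlm.le (by linarith) _)) (hH x)
  intro x
  rw [is_const_of_deriv_eq_zero (fun t => (hφ t).differentiableAt)
    (fun t => (hφ t).deriv.trans (hφ'_zero t)) x 0, h0]

/-- Let `1 ≤ q < 2`, `λ₊, λ₋ > 0`, `μ ≥ 0`, `γ_q = 2/(2-q)`. A `2π`-periodic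
`C¹` solution of `-φ'' - γ_q² φ = μ(λ₊(φ⁺)^{q-1} - λ₋(φ⁻)^{q-1})` with
`φ(0) = φ'(0) = 0` vanishes identically. -/
theorem periodic_ode_unique_trivial (q lp lm μ : ℝ) (hq1 : 1 ≤ q) (hq2 : q < 2)
    (hlp : 0 < lp) (hlm : 0 < lm) (hμ : 0 ≤ μ)
    (φ φ' : ℝ → ℝ)
    (hper : Function.Periodic φ (2 * Real.pi))
    (hφ : ∀ x, HasDerivAt φ (φ' x) x)
    (hφ' : ∀ x, HasDerivAt φ'
      (-((2 / (2 - q)) ^ 2 * φ x) - μ * twoPhase lp lm q (φ x)) x)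
    (h0 : φ 0 = 0) (h0' : φ' 0 = 0) :
    ∀ x, φ x = 0 :=
  periodic_ode_unique_trivial_general q lp lm μ hq1 hlp hlm hμ φ φ' hφ hφ' h0 h0'
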